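/- arXiv:2305.03645 — 3 statements merged into one kernel-verified Lean document; each statement's English description precedes it below -/
import Mathlib

section
/- Let P be a positive stochastic matrix indexed by a finite set A. Then the following are equivalent: (i) P is reversible, i.e., there exists a strictly positive probability vector π with P(i|j)π(j) = P(j|i)π(i) for all i,j ∈ A; (ii) P is transitive, i.e., P(j|i)P(k|j)P(i|k) = P(k|i)P(j|k)P(i|j) for all i,j,k ∈ A. In this case, for any fixed i ∈ A the reversing distribution is given by π(j) = r(j|i)/∑_{k∈A} r(k|i) for all j ∈ A, where r(j|i) = P(j|i)/P(i|j); in particular π is unique. -/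
/-!
Detailed balance `P(i|j) π(j) = P(j|i) π(i)` says `π(j) / π(i) = r(j|i) := P(j|i) / P(i|j)`.
Multiplying the three balance equations around a cycle `i → j → k → i` cancels `π` and gives
transitivity. Conversely, transitivity says exactly that `j ↦ r(j|i)` balances `P` for a fixed
base point `i`, so normalising it gives a reversing distribution; and any reversing `π` is
`π(i) • r(·|i)`, so normalisation pins it down.
-/

def IsStochastic {A : Type*} [Fintype A] (B : Matrix A A ℝ) : Prop :=
  (∀ i j, 0 ≤ B i j) ∧ ∀ j, ∑ i, B i j = 1

namespace Matrix

variable {A K : Type*}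

def DetailedBalance [Mul K] (P : Matrix A A K) (π : A → K) : Prop :=
  ∀ i j, P i j * π j = P j i * π i

def KolmogorovTransitive [Mul K] (P : Matrix A A K) : Prop :=
  ∀ i j k, P j i * P k j * P i k = P k i * P j k * P i j

def reversalRatio [Div K] (P : Matrix A A K) (j i : A) : K :=
  P j i / P i j

section Field

variable [Field K] {P : Matrix A A K} {π : A → K}

theorem DetailedBalance.kolmogorovTransitive (hπ : ∀ i, π i ≠ 0) (h : P.DetailedBalance π) :
    P.KolmogorovTransitive := by
  intro i j k
  apply mul_right_cancel₀ (mul_ne_zero (mul_ne_zero (hπ i) (hπ j)) (hπ k))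
  calc P j i * P k j * P i k * (π i * π j * π k)
      = (P j i * π i) * (P k j * π j) * (P i k * π k) := by ring
    _ = (P i j * π j) * (P j k * π k) * (P k i * π i) := by rw [h i j, h j k, h k i]
    _ = P k i * P j k * P i j * (π i * π j * π k) := by ring

theorem KolmogorovTransitive.detailedBalance_reversalRatio (hP : ∀ i j, P i j ≠ 0)
    (h : P.KolmogorovTransitive) (i : A) : P.DetailedBalance (P.reversalRatio · i) := by
  intro a b
  simp only [reversalRatio]
  rw [mul_div_assoc', mul_div_assoc', div_eq_div_iff (hP i b) (hP i a)]
  linear_combination -h i a b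

theorem DetailedBalance.smul (c : K) (h : P.DetailedBalance π) : P.DetailedBalance (c • π) := by
  intro i j
  simp only [Pi.smul_apply, smul_eq_mul, mul_left_comm _ c, h i j]

theorem DetailedBalance.eq_mul_reversalRatio (hP : ∀ i j, P i j ≠ 0) (h : P.DetailedBalance π)
    (i j : A) : π j = π i * P.reversalRatio j i := by
  rw [reversalRatio, mul_div_assoc', eq_div_iff (hP i j)]
  linear_combination h i j

variable [Fintype A]

theorem DetailedBalance.eq_reversalRatio_div_sum (hP : ∀ i j, P i j ≠ 0)
    (h : P.DetailedBalance π) (hsum : ∑ k, π k = 1) (i j : A) :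
    π j = P.reversalRatio j i / ∑ k, P.reversalRatio k i := by
  have hπ := h.eq_mul_reversalRatio hP i
  have hπi : π i * ∑ k, P.reversalRatio k i = 1 := by
    rw [Finset.mul_sum, ← hsum]
    simp only [← hπ]
  rw [hπ j, eq_inv_of_mul_eq_one_left hπi, inv_mul_eq_div]

end Field

variable [Field K] [LinearOrder K] [IsStrictOrderedRing K] [Fintype A] [Nonempty A]
  {P : Matrix A A K}

theorem KolmogorovTransitive.exists_detailedBalance (hP : ∀ i j, 0 < P i j)
    (h : P.KolmogorovTransitive) :
    ∃ π : A → K, (∀ i, 0 < π i) ∧ ∑ i, π i = 1 ∧ P.DetailedBalance π := by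
  obtain ⟨i⟩ := ‹Nonempty A›
  have hr : ∀ j, 0 < P.reversalRatio j i := fun j => div_pos (hP j i) (hP i j)
  have hS : 0 < ∑ k, P.reversalRatio k i := Finset.sum_pos (fun k _ => hr k) Finset.univ_nonempty
  refine ⟨(∑ k, P.reversalRatio k i)⁻¹ • (P.reversalRatio · i), fun j => ?_, ?_, ?_⟩
  · exact smul_pos (inv_pos.mpr hS) (hr j)
  · simp only [Pi.smul_apply, smul_eq_mul, ← Finset.mul_sum, inv_mul_cancel₀ hS.ne']
  · exact (h.detailedBalance_reversalRatio (fun a b => (hP a b).ne') i).smul _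

end Matrix

theorem kolmogorov_criterion_general
    {A : Type*} [Fintype A] [Nonempty A]
    (P : Matrix A A ℝ) (hpos : ∀ i j : A, 0 < P i j) :
    ((∃ pv : A → ℝ, (∀ i, 0 < pv i) ∧ (∑ i, pv i = 1) ∧
        ∀ i j : A, P i j * pv j = P j i * pv i) ↔
      (∀ i j k : A, P j i * P k j * P i k = P k i * P j k * P i j)) ∧
    (∀ pv : A → ℝ, (∀ i, 0 < pv i) → (∑ i, pv i = 1) →
      (∀ i j : A, P i j * pv j = P j i * pv i) →
      ∀ i j : A, pv j = (P j i / P i j) / ∑ k, P k i / P i k) := by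
  refine ⟨⟨?_, Matrix.KolmogorovTransitive.exists_detailedBalance hpos⟩, ?_⟩
  · rintro ⟨pv, hpv, -, hbal⟩
    exact Matrix.DetailedBalance.kolmogorovTransitive (fun i => (hpv i).ne') hbal
  · intro pv _ hsum hbal
    exact Matrix.DetailedBalance.eq_reversalRatio_div_sum (fun i j => (hpos i j).ne') hbal hsum

/-- Proposition (Kolmogorov criterion): a positive stochastic matrix `P` is reversible
under some strictly positive probability vector `π` if and only if it is transitive
(satisfies the Kolmogorov product rule); in this case, for any fixed `i`, the reversing
distribution is `π(j) = r(j∣i)/∑ₖ r(k∣i)` with `r(j∣i) = P(j∣i)/P(i∣j)`, and hence `π`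
is unique. -/
theorem kolmogorov_criterion
    {A : Type*} [Fintype A] [Nonempty A]
    (P : Matrix A A ℝ) (hst : IsStochastic P) (hpos : ∀ i j : A, 0 < P i j) :
    ((∃ pv : A → ℝ, (∀ i, 0 < pv i) ∧ (∑ i, pv i = 1) ∧
        ∀ i j : A, P i j * pv j = P j i * pv i) ↔
      (∀ i j k : A, P j i * P k j * P i k = P k i * P j k * P i j)) ∧
    (∀ pv : A → ℝ, (∀ i, 0 < pv i) → (∑ i, pv i = 1) →
      (∀ i j : A, P i j * pv j = P j i * pv i) →
      ∀ i j : A, pv j = (P j i / P i j) / ∑ k, P k i / P i k) :=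
  kolmogorov_criterion_general P hpos
end

section
/- Let A be a finite set with at least three elements, let ρ be a binary choice probability on A with a binary value representation (s, v, w), and let Q be a nice stochastic matrix indexed by A. Define the transition matrix M by M(i|j) = Q(i|j)·ρ(i|j) for i ≠ j and M(j|j) = 1 − ∑_{k≠j} Q(k|j)·ρ(k|j), and define the probability vector π on A by π(i) = e^{v(i)}/(∑_{j ∈ argmax_A w} e^{v(j)}) if w(i) = max_A w, and π(i) = 0 otherwise. Then M(k|j)π(j) = M(j|k)π(k) for all j,k ∈ A, Mπ = π, π is the unique stationary distribution of M, and there exists ε ∈ (0,1) such that ‖Mⁿμ − π‖₁ ≤ 2(1−ε)ⁿ for every probability vector μ on A and every n ≥ 0. -/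
open scoped Classical

/-- A binary choice probability on `A`. -/
def IsBCP {A : Type*} (ρ : A → A → ℝ) : Prop :=
  (∀ i j : A, 0 ≤ ρ i j ∧ ρ i j ≤ 1) ∧
  (∀ i j : A, i ≠ j → (ρ i j = 1 ↔ ρ j i = 0)) ∧
  (∃ ε : ℝ, 0 < ε ∧ ∀ i : A, ρ i i = ε)

/-- `(s, v, w)` is a binary value representation of `ρ`. -/
def IsBVRep {A : Type*} (ρ : A → A → ℝ) (s : A → A → ℝ) (v w : A → ℝ) : Prop :=
  (∀ i j : A, 0 < s i j) ∧ (∀ i j : A, s i j = s j i) ∧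
  ∀ i j : A,
    (w j < w i → ρ i j = 1) ∧
    (w i = w j →
      ρ i j = s i j * (Real.exp (v i) / (Real.exp (v i) + Real.exp (v j)))) ∧
    (w i < w j → ρ i j = 0)

/-!
The vector `π` is carried by the maximisers of `w`. Between two maximisers `j, k` both flows
`M(k|j) π(j)` and `M(j|k) π(k)` equal `Q(j|k) s(j,k) e^{v(j)} e^{v(k)} / (e^{v(j)} + e^{v(k)})`
up to the normalisation, and in every other pair one flow vanishes because `π` does and the
other because `ρ` rejects every move down in `w`; detailed balance gives stationarity.
A maximiser `i₀` is entered from every state with positive probability, and is kept with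
positive probability because a move to another maximiser is rejected with positive probability.
So row `i₀` of `M` is bounded below by some `ε > 0`, and this Doeblin condition makes `M` a
`(1 - ε)`-contraction in `ℓ¹` on zero-sum vectors: uniqueness and geometric convergence follow.
-/

open Finset Matrix Real

namespace Matrix

variable {n : Type*} [Fintype n]

lemma sum_abs_mulVec_le_of_sum_col_le {N : Matrix n n ℝ} {c : ℝ} (hN : ∀ i j, 0 ≤ N i j)
    (hcol : ∀ j, ∑ i, N i j ≤ c) (x : n → ℝ) :
    ∑ i, |(N *ᵥ x) i| ≤ c * ∑ j, |x j| :=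
  calc ∑ i, |(N *ᵥ x) i| ≤ ∑ i, ∑ j, N i j * |x j| := by
        gcongr with i
        refine (abs_sum_le_sum_abs _ _).trans_eq ?_
        simp only [abs_mul, abs_of_nonneg (hN _ _)]
    _ = ∑ j, (∑ i, N i j) * |x j| := by
        rw [sum_comm]
        simp only [sum_mul]
    _ ≤ c * ∑ j, |x j| := by
        rw [mul_sum]
        gcongr with j
        exact hcol j

lemma mulVec_eq_self_of_detailed_balance {M : Matrix n n ℝ} (hcol : ∀ j, ∑ i, M i j = 1)
    {ν : n → ℝ} (hdb : ∀ j k, M k j * ν j = M j k * ν k) : M *ᵥ ν = ν := by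
  ext i
  calc (M *ᵥ ν) i = ∑ j, M j i * ν i := sum_congr rfl fun j _ => hdb j i
    _ = ν i := by rw [← sum_mul, hcol, one_mul]

lemma sum_abs_sub_le_two {μ ν : n → ℝ} (hμ : ∀ i, 0 ≤ μ i) (hμ1 : ∑ i, μ i = 1)
    (hν : ∀ i, 0 ≤ ν i) (hν1 : ∑ i, ν i = 1) : ∑ i, |μ i - ν i| ≤ 2 :=
  calc ∑ i, |μ i - ν i| ≤ ∑ i, (μ i + ν i) := by
        gcongr with i
        rw [abs_sub_le_iff]
        constructor <;> linarith [hμ i, hν i]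
    _ = 2 := by rw [sum_add_distrib, hμ1, hν1]; norm_num

variable [DecidableEq n] {M : Matrix n n ℝ}

lemma sum_abs_mulVec_le_of_le_row (hM : M ∈ colStochastic ℝ n) {i₀ : n} {ε : ℝ}
    (hrow : ∀ j, ε ≤ M i₀ j) {x : n → ℝ} (hx : ∑ j, x j = 0) :
    ∑ i, |(M *ᵥ x) i| ≤ (1 - ε) * ∑ j, |x j| := by
  -- Lowering row `i₀` by `ε` keeps the entries nonnegative and does not change `M *ᵥ x`.
  set N := M - vecMulVec (Pi.single i₀ ε) 1
  have hNx : N *ᵥ x = M *ᵥ x := by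
    rw [sub_mulVec, vecMulVec_mulVec, one_dotProduct, hx]
    simp
  have hN : ∀ i j, 0 ≤ N i j := by
    intro i j
    rcases eq_or_ne i i₀ with rfl | hi
    · simpa [N, vecMulVec] using hrow j
    · simpa [N, vecMulVec, hi] using nonneg_of_mem_colStochastic hM
  have hcol : ∀ j, ∑ i, N i j ≤ 1 - ε := fun j => by
    simp [N, vecMulVec, sum_sub_distrib, sum_col_of_mem_colStochastic hM]
  rw [← hNx]
  exact sum_abs_mulVec_le_of_sum_col_le hN hcol x

lemma sum_abs_pow_mulVec_le_of_le_row (hM : M ∈ colStochastic ℝ n) {i₀ : n} {ε : ℝ}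
    (hrow : ∀ j, ε ≤ M i₀ j) {x : n → ℝ} (hx : ∑ j, x j = 0) (m : ℕ) :
    ∑ i, |(M ^ m *ᵥ x) i| ≤ (1 - ε) ^ m * ∑ j, |x j| := by
  have hε : ε ≤ 1 := (hrow i₀).trans (le_one_of_mem_colStochastic hM)
  induction m with
  | zero => simp
  | succ m ih =>
    have hsum : ∑ i, (M ^ m *ᵥ x) i = 0 := by
      rw [sum_mulVec_of_mem_colStochastic (pow_mem hM m), hx]
    calc ∑ i, |(M ^ (m + 1) *ᵥ x) i| = ∑ i, |(M *ᵥ (M ^ m *ᵥ x)) i| := by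
          rw [pow_succ', ← mulVec_mulVec]
      _ ≤ (1 - ε) * ∑ i, |(M ^ m *ᵥ x) i| := sum_abs_mulVec_le_of_le_row hM hrow hsum
      _ ≤ (1 - ε) * ((1 - ε) ^ m * ∑ j, |x j|) := by gcongr
      _ = (1 - ε) ^ (m + 1) * ∑ j, |x j| := by ring

lemma eq_of_mulVec_eq_self_of_le_row (hM : M ∈ colStochastic ℝ n) {i₀ : n} {ε : ℝ}
    (hε : 0 < ε) (hrow : ∀ j, ε ≤ M i₀ j) {x y : n → ℝ} (hx : M *ᵥ x = x) (hy : M *ᵥ y = y)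
    (hsum : ∑ i, x i = ∑ i, y i) : x = y := by
  have hfix : M *ᵥ (x - y) = x - y := by rw [mulVec_sub, hx, hy]
  have hzero : ∑ i, (x - y) i = 0 := by simp [sum_sub_distrib, hsum]
  have hcontr := sum_abs_mulVec_le_of_le_row hM hrow hzero
  rw [hfix] at hcontr
  have habs : ∑ i, |(x - y) i| = 0 :=
    le_antisymm (by nlinarith [sum_nonneg fun i (_ : i ∈ univ) => abs_nonneg ((x - y) i)])
      (by positivity)
  ext i
  exact sub_eq_zero.mp <| abs_eq_zero.mp <|
    (sum_eq_zero_iff_of_nonneg fun i _ => abs_nonneg _).mp habs i (mem_univ i)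

lemma pow_mulVec_eq_self {x : n → ℝ} (hx : M *ᵥ x = x) (m : ℕ) : M ^ m *ᵥ x = x := by
  induction m with
  | zero => simp
  | succ m ih => rw [pow_succ', ← mulVec_mulVec, ih, hx]

lemma sum_abs_pow_mulVec_sub_le_of_le_row (hM : M ∈ colStochastic ℝ n) {i₀ : n} {ε : ℝ}
    (hrow : ∀ j, ε ≤ M i₀ j) {μ ν : n → ℝ} (hμ : ∀ i, 0 ≤ μ i) (hμ1 : ∑ i, μ i = 1)
    (hν : ∀ i, 0 ≤ ν i) (hν1 : ∑ i, ν i = 1) (hνfix : M *ᵥ ν = ν) (m : ℕ) :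
    ∑ i, |(M ^ m *ᵥ μ) i - ν i| ≤ 2 * (1 - ε) ^ m := by
  have hε : ε ≤ 1 := (hrow i₀).trans (le_one_of_mem_colStochastic hM)
  have hzero : ∑ i, (μ - ν) i = 0 := by simp [sum_sub_distrib, hμ1, hν1]
  calc ∑ i, |(M ^ m *ᵥ μ) i - ν i| = ∑ i, |(M ^ m *ᵥ (μ - ν)) i| := by
        rw [mulVec_sub, pow_mulVec_eq_self hνfix]
        rfl
    _ ≤ (1 - ε) ^ m * ∑ i, |(μ - ν) i| := sum_abs_pow_mulVec_le_of_le_row hM hrow hzero m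
    _ ≤ (1 - ε) ^ m * 2 :=
        mul_le_mul_of_nonneg_left (sum_abs_sub_le_two hμ hμ1 hν hν1)
          (pow_nonneg (by linarith) m)
    _ = 2 * (1 - ε) ^ m := mul_comm _ _

end Matrix

lemma exists_mem_Ioo_le_of_pos {ι : Type*} [Finite ι] {f : ι → ℝ} (hf : ∀ i, 0 < f i) :
    ∃ ε ∈ Set.Ioo (0 : ℝ) 1, ∀ i, ε ≤ f i := by
  rcases isEmpty_or_nonempty ι with _ | _
  · exact ⟨1 / 2, by norm_num, isEmptyElim⟩
  obtain ⟨i₀, hi₀⟩ := Finite.exists_min f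
  exact ⟨min (f i₀) (1 / 2),
    ⟨lt_min (hf i₀) (by norm_num), min_lt_of_right_lt (by norm_num)⟩,
    fun i => (min_le_left _ _).trans (hi₀ i)⟩

section Metropolis

variable {A : Type*} [Fintype A] [DecidableEq A] {Q M : Matrix A A ℝ} {ρ : A → A → ℝ}

lemma metropolis_diag_eq (hQ : IsStochastic Q)
    (hMdiag : ∀ j, M j j = 1 - ∑ k ∈ univ.erase j, Q k j * ρ k j) (j : A) :
    M j j = Q j j + ∑ k ∈ univ.erase j, Q k j * (1 - ρ k j) := by
  have hQj := add_sum_erase univ (fun k => Q k j) (mem_univ j)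
  simp only [hQ.2 j] at hQj
  simp only [hMdiag j, mul_one_sub, sum_sub_distrib]
  linarith

lemma metropolis_mem_colStochastic (hQ : IsStochastic Q) (hρ : ∀ i j, 0 ≤ ρ i j ∧ ρ i j ≤ 1)
    (hMoff : ∀ i j, i ≠ j → M i j = Q i j * ρ i j)
    (hMdiag : ∀ j, M j j = 1 - ∑ k ∈ univ.erase j, Q k j * ρ k j) :
    M ∈ colStochastic ℝ A := by
  refine mem_colStochastic_iff_sum.mpr ⟨fun i j => ?_, fun j => ?_⟩
  · rcases eq_or_ne i j with rfl | hij
    · rw [metropolis_diag_eq hQ hMdiag]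
      exact add_nonneg (hQ.1 i i)
        (sum_nonneg fun k _ => mul_nonneg (hQ.1 k i) (sub_nonneg.mpr (hρ k i).2))
    · rw [hMoff i j hij]
      exact mul_nonneg (hQ.1 i j) (hρ i j).1
  · rw [← add_sum_erase univ _ (mem_univ j), hMdiag j,
      sum_congr rfl fun i hi => hMoff i j (ne_of_mem_erase hi)]
    ring

lemma metropolis_diag_pos (hQ : IsStochastic Q) (hρ : ∀ i j, ρ i j ≤ 1)
    (hMdiag : ∀ j, M j j = 1 - ∑ k ∈ univ.erase j, Q k j * ρ k j) {j k : A} (hkj : k ≠ j)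
    (hQkj : 0 < Q k j) (hρkj : ρ k j < 1) : 0 < M j j := by
  rw [metropolis_diag_eq hQ hMdiag]
  refine add_pos_of_nonneg_of_pos (hQ.1 j j) (sum_pos' (fun l _ => ?_) ⟨k, ?_, ?_⟩)
  · exact mul_nonneg (hQ.1 l j) (sub_nonneg.mpr (hρ l j))
  · exact mem_erase.mpr ⟨hkj, mem_univ k⟩
  · exact mul_pos hQkj (sub_pos.mpr hρkj)

end Metropolis

namespace IsBVRep

variable {A : Type*} {ρ s : A → A → ℝ} {v w : A → ℝ} {Q M : Matrix A A ℝ}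

lemma pos_of_le (h : IsBVRep ρ s v w) {i j : A} (hw : w j ≤ w i) : 0 < ρ i j := by
  rcases hw.lt_or_eq with hlt | heq
  · rw [(h.2.2 i j).1 hlt]
    exact one_pos
  · rw [(h.2.2 i j).2.1 heq.symm]
    exact mul_pos (h.1 i j) (by positivity)

lemma lt_one_of_le (h : IsBVRep ρ s v w) (hρ : IsBCP ρ) {i j : A} (hij : i ≠ j)
    (hw : w i ≤ w j) : ρ i j < 1 :=
  lt_of_le_of_ne (hρ.1 i j).2 fun h1 =>
    (h.pos_of_le hw).ne' ((hρ.2.1 i j hij).mp h1)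

lemma detailed_balance (h : IsBVRep ρ s v w) (hQ : Q.IsSymm)
    (hMoff : ∀ i j, i ≠ j → M i j = Q i j * ρ i j) {p : A → ℝ}
    (hp_lt : ∀ i j, w i < w j → p i = 0)
    (hp_eq : ∀ i j, w i = w j → p i * exp (v j) = p j * exp (v i)) (j k : A) :
    M k j * p j = M j k * p k := by
  rcases eq_or_ne j k with rfl | hjk
  · rfl
  rw [hMoff k j hjk.symm, hMoff j k hjk]
  rcases lt_trichotomy (w j) (w k) with hlt | heq | hgt
  · rw [hp_lt j k hlt, (h.2.2 j k).2.2 hlt]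
    ring
  · rw [(h.2.2 k j).2.1 heq.symm, (h.2.2 j k).2.1 heq, hQ.apply j k, h.2.1 k j,
      add_comm (exp (v k))]
    field_simp
    linear_combination (Q j k * s j k) * hp_eq j k heq
  · rw [hp_lt k j hgt, (h.2.2 k j).2.2 hgt]
    ring

variable [Fintype A] [DecidableEq A]

lemma metropolis_row_pos (h : IsBVRep ρ s v w) (hρ : IsBCP ρ) [Nontrivial A]
    (hQ : IsStochastic Q) (hQpos : ∀ i j, i ≠ j → 0 < Q i j)
    (hMoff : ∀ i j, i ≠ j → M i j = Q i j * ρ i j)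
    (hMdiag : ∀ j, M j j = 1 - ∑ k ∈ univ.erase j, Q k j * ρ k j) {i₀ : A}
    (hi₀ : ∀ k, w k ≤ w i₀) (j : A) : 0 < M i₀ j := by
  rcases eq_or_ne i₀ j with rfl | hj
  · obtain ⟨k, hk⟩ := exists_ne i₀
    exact metropolis_diag_pos hQ (fun i j => (hρ.1 i j).2) hMdiag hk (hQpos k i₀ hk)
      (h.lt_one_of_le hρ hk (hi₀ k))
  · rw [hMoff i₀ j hj]
    exact mul_pos (hQpos i₀ j hj) (h.pos_of_le (hi₀ j))

end IsBVRep

section ArgmaxSoftmax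

variable {A : Type*} [Fintype A]

noncomputable def argmaxSoftmax (v w : A → ℝ) (i : A) : ℝ :=
  if ∀ j, w j ≤ w i then
    exp (v i) / ∑ j ∈ univ.filter fun j => ∀ k, w k ≤ w j, exp (v j)
  else 0

variable (v w : A → ℝ)

lemma argmaxSoftmax_nonneg (i : A) : 0 ≤ argmaxSoftmax v w i := by
  unfold argmaxSoftmax
  split_ifs <;> positivity

lemma sum_argmaxSoftmax [Nonempty A] : ∑ i, argmaxSoftmax v w i = 1 := by
  obtain ⟨i₀, -, hi₀⟩ := exists_max_image univ w univ_nonempty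
  have hpos : 0 < ∑ j ∈ univ.filter fun j => ∀ k, w k ≤ w j, exp (v j) :=
    sum_pos (fun j _ => exp_pos _) ⟨i₀, by simpa using fun k => hi₀ k (mem_univ k)⟩
  simp only [argmaxSoftmax]
  rw [← sum_filter, ← sum_div, div_self hpos.ne']

lemma argmaxSoftmax_eq_zero_of_lt {i j : A} (h : w i < w j) : argmaxSoftmax v w i = 0 :=
  if_neg fun hi => (hi j).not_gt h

lemma argmaxSoftmax_mul_exp_eq {i j : A} (h : w i = w j) :
    argmaxSoftmax v w i * exp (v j) = argmaxSoftmax v w j * exp (v i) := by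
  have hij : (∀ k, w k ≤ w i) ↔ ∀ k, w k ≤ w j := by rw [h]
  unfold argmaxSoftmax
  by_cases hi : ∀ k, w k ≤ w i
  · rw [if_pos hi, if_pos (hij.mp hi)]
    ring
  · rw [if_neg hi, if_neg (hij.not.mp hi)]
    ring

end ArgmaxSoftmax

/-- Theorem (ergodic value analysis of the Neural Metropolis Algorithm): for a
value-based algorithm with nice exploration matrix `Q`, the softmax-over-argmax
distribution `π` satisfies detailed balance with respect to the transition matrix `M`,
is the unique stationary distribution of `M`, and the laws `Mⁿμ` converge to `π`
geometrically in total variation, uniformly over initial distributions `μ`. -/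
theorem nma_value_based_limit
    {A : Type*} [Fintype A] [DecidableEq A] (hcard : 3 ≤ Fintype.card A)
    (ρ : A → A → ℝ) (hρ : IsBCP ρ)
    (s : A → A → ℝ) (v w : A → ℝ) (hrep : IsBVRep ρ s v w)
    (Q : Matrix A A ℝ) (hQ : IsStochastic Q) (hQsymm : Q.IsSymm)
    (hQpos : ∀ i j : A, i ≠ j → 0 < Q i j)
    (M : Matrix A A ℝ)
    (hMoff : ∀ i j : A, i ≠ j → M i j = Q i j * ρ i j)
    (hMdiag : ∀ j : A, M j j = 1 - ∑ k ∈ Finset.univ.erase j, Q k j * ρ k j)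
    (pv : A → ℝ)
    (hpv : ∀ i : A, pv i =
      if ∀ j : A, w j ≤ w i then
        Real.exp (v i) /
          ∑ j ∈ Finset.univ.filter fun j : A => ∀ k : A, w k ≤ w j, Real.exp (v j)
      else 0) :
    (∀ j k : A, M k j * pv j = M j k * pv k) ∧
    M.mulVec pv = pv ∧
    (∀ i, 0 ≤ pv i) ∧ (∑ i, pv i = 1) ∧
    (∀ pv' : A → ℝ, (∀ i, 0 ≤ pv' i) → (∑ i, pv' i = 1) →
      M.mulVec pv' = pv' → pv' = pv) ∧
    ∃ ε : ℝ, ε ∈ Set.Ioo (0 : ℝ) 1 ∧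
      ∀ μ : A → ℝ, (∀ i, 0 ≤ μ i) → (∑ i, μ i = 1) →
        ∀ m : ℕ, ∑ i, |((M ^ m).mulVec μ) i - pv i| ≤ 2 * (1 - ε) ^ m := by
  obtain rfl : pv = argmaxSoftmax v w := funext hpv
  have : Nontrivial A := Fintype.one_lt_card_iff_nontrivial.mp (by omega)
  have hM := metropolis_mem_colStochastic hQ hρ.1 hMoff hMdiag
  have hdb := hrep.detailed_balance hQsymm hMoff (fun _ _ => argmaxSoftmax_eq_zero_of_lt v w)
    (fun _ _ => argmaxSoftmax_mul_exp_eq v w)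
  have hstat := mulVec_eq_self_of_detailed_balance (sum_col_of_mem_colStochastic hM) hdb
  obtain ⟨i₀, -, hi₀⟩ := exists_max_image univ w univ_nonempty
  obtain ⟨ε, hε, hrow⟩ := exists_mem_Ioo_le_of_pos
    (hrep.metropolis_row_pos hρ hQ hQpos hMoff hMdiag fun k => hi₀ k (mem_univ k))
  refine ⟨hdb, hstat, argmaxSoftmax_nonneg v w, sum_argmaxSoftmax v w,
    fun _ _ hp1 hpfix => eq_of_mulVec_eq_self_of_le_row hM hε.1 hrow hpfix hstat ?_, ε, hε,
    fun μ hμ hμ1 => sum_abs_pow_mulVec_sub_le_of_le_row hM hrow hμ hμ1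
      (argmaxSoftmax_nonneg v w) (sum_argmaxSoftmax v w) hstat⟩
  rw [hp1, sum_argmaxSoftmax]
end

section
/- Let A be a finite set with at least three elements, let ρ be a positive binary choice probability on A, and let Q be a nice stochastic matrix indexed by A. Define the transition matrix M by M(i|j) = Q(i|j)·ρ(i|j) for i ≠ j and M(j|j) = 1 − ∑_{k≠j} Q(k|j)·ρ(k|j). Then M is reversible (i.e., there exists a strictly positive probability vector π with M(i|j)π(j) = M(j|i)π(i) for all i,j) if and only if ρ is transitive. -/
/-- Transitivity of a binary choice probability. -/
def BCPTransitive {A : Type*} (ρ : A → A → ℝ) : Prop :=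
  ∀ i j k : A, i ≠ j → j ≠ k → i ≠ k →
    ρ j i * ρ k j * ρ i k = ρ k i * ρ j k * ρ i j

/-! Detailed balance of `M` with respect to `π` reduces, after cancelling the symmetric nonzero
factor `Q(i|j) = Q(j|i)`, to `ρ(i|j) π(j) = ρ(j|i) π(i)`. Such a `π` forces the cyclic products
of `ρ` around every triangle to agree, which is transitivity. Conversely, under transitivity the
odds `π(i) = ρ(i|a) / ρ(a|i)` against a fixed alternative `a` satisfy these equations, and
normalising them gives the stationary distribution. -/

section

variable {A : Type*}

def DetailedBalance (R : A → A → ℝ) (p : A → ℝ) : Prop :=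
  ∀ i j : A, i ≠ j → R i j * p j = R j i * p i

namespace DetailedBalance

variable {R : A → A → ℝ} {p : A → ℝ}

theorem div_const (h : DetailedBalance R p) (c : ℝ) : DetailedBalance R (fun i => p i / c) :=
  fun i j hij => by rw [← mul_div_assoc, h i j hij, mul_div_assoc]

theorem bcpTransitive (h : DetailedBalance R p) (hp : ∀ i, p i ≠ 0) : BCPTransitive R := by
  intro i j k hij hjk hik
  have hcycle : (R j i * p i) * (R k j * p j) * (R i k * p k)
      = (R i j * p j) * (R j k * p k) * (R k i * p i) := by
    rw [h j i hij.symm, h k j hjk.symm, h i k hik]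
  have hprod : p i * p j * p k ≠ 0 := mul_ne_zero (mul_ne_zero (hp i) (hp j)) (hp k)
  exact mul_right_cancel₀ hprod (by linear_combination hcycle)

end DetailedBalance

theorem BCPTransitive.detailedBalance_odds [DecidableEq A] {ρ : A → A → ℝ}
    (h : BCPTransitive ρ) (hpos : ∀ i j : A, i ≠ j → 0 < ρ i j) (a : A) :
    DetailedBalance ρ (fun i => if i = a then 1 else ρ i a / ρ a i) := by
  have hne : ∀ i j, i ≠ j → ρ i j ≠ 0 := fun i j hij => (hpos i j hij).ne'
  intro i j hij
  rcases eq_or_ne j a with rfl | hja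
  · simp only [if_pos, if_neg hij]
    field_simp [hne j i hij.symm]
  rcases eq_or_ne i a with rfl | hia
  · simp only [if_pos, if_neg hja]
    field_simp [hne i j hij]
  simp only [if_neg hja, if_neg hia]
  field_simp [hne a j hja.symm, hne a i hia.symm]
  linear_combination h a j i hja.symm hij.symm hia.symm

theorem BCPTransitive.exists_pos_detailedBalance [Nonempty A] {ρ : A → A → ℝ}
    (h : BCPTransitive ρ) (hpos : ∀ i j : A, i ≠ j → 0 < ρ i j) :
    ∃ p : A → ℝ, (∀ i, 0 < p i) ∧ DetailedBalance ρ p := by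
  classical
  obtain ⟨a⟩ := ‹Nonempty A›
  refine ⟨_, fun i => ?_, h.detailedBalance_odds hpos a⟩
  split_ifs with hia
  · exact one_pos
  · exact div_pos (hpos i a hia) (hpos a i (Ne.symm hia))

theorem forall_balance_iff_detailedBalance {Q M ρ : A → A → ℝ} (hQsymm : ∀ i j, Q j i = Q i j)
    (hQ : ∀ i j, i ≠ j → Q i j ≠ 0) (hMoff : ∀ i j, i ≠ j → M i j = Q i j * ρ i j)
    (p : A → ℝ) : (∀ i j, M i j * p j = M j i * p i) ↔ DetailedBalance ρ p := by
  constructor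
  · intro h i j hij
    have hij' := h i j
    rw [hMoff i j hij, hMoff j i hij.symm, hQsymm i j] at hij'
    exact mul_left_cancel₀ (hQ i j hij) (by linear_combination hij')
  · intro h i j
    rcases eq_or_ne i j with rfl | hij
    · rfl
    rw [hMoff i j hij, hMoff j i hij.symm, hQsymm i j]
    linear_combination Q i j * h i j hij

end

theorem nma_reversible_iff_transitive_general
    {A : Type*} [Fintype A] (hcard : 3 ≤ Fintype.card A)
    (ρ : A → A → ℝ) (hpos : ∀ i j : A, i ≠ j → 0 < ρ i j)
    (Q : Matrix A A ℝ) (hQsymm : Q.IsSymm)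
    (hQpos : ∀ i j : A, i ≠ j → 0 < Q i j)
    (M : Matrix A A ℝ)
    (hMoff : ∀ i j : A, i ≠ j → M i j = Q i j * ρ i j) :
    (∃ pv : A → ℝ, (∀ i, 0 < pv i) ∧ (∑ i, pv i = 1) ∧
        ∀ i j : A, M i j * pv j = M j i * pv i) ↔
      BCPTransitive ρ := by
  have hbalance := forall_balance_iff_detailedBalance hQsymm.apply
    (fun i j hij => (hQpos i j hij).ne') hMoff
  constructor
  · rintro ⟨pv, hpv, -, hbal⟩
    exact ((hbalance pv).1 hbal).bcpTransitive fun i => (hpv i).ne'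
  · intro htrans
    have : Nonempty A := Fintype.card_pos_iff.mp (by omega)
    obtain ⟨p, hp, hbal⟩ := htrans.exists_pos_detailedBalance hpos
    have hsum : 0 < ∑ i, p i := Finset.sum_pos (fun i _ => hp i) Finset.univ_nonempty
    exact ⟨fun i => p i / ∑ k, p k, fun i => div_pos (hp i) hsum,
      by rw [← Finset.sum_div, div_self hsum.ne'], (hbalance _).2 (hbal.div_const _)⟩

/-- Theorem (value-based ⟺ reversible): for a Neural Metropolis Algorithm with
positive binary choice probability `ρ` and nice exploration matrix `Q`, the transition
matrix `M` is reversible if and only if `ρ` is transitive. -/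
theorem nma_reversible_iff_transitive
    {A : Type*} [Fintype A] [DecidableEq A] (hcard : 3 ≤ Fintype.card A)
    (ρ : A → A → ℝ) (hρ : IsBCP ρ) (hpos : ∀ i j : A, i ≠ j → 0 < ρ i j)
    (Q : Matrix A A ℝ) (hQ : IsStochastic Q) (hQsymm : Q.IsSymm)
    (hQpos : ∀ i j : A, i ≠ j → 0 < Q i j)
    (M : Matrix A A ℝ)
    (hMoff : ∀ i j : A, i ≠ j → M i j = Q i j * ρ i j)
    (hMdiag : ∀ j : A, M j j = 1 - ∑ k ∈ Finset.univ.erase j, Q k j * ρ k j) :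
    (∃ pv : A → ℝ, (∀ i, 0 < pv i) ∧ (∑ i, pv i = 1) ∧
        ∀ i j : A, M i j * pv j = M j i * pv i) ↔
      BCPTransitive ρ :=
  nma_reversible_iff_transitive_general hcard ρ hpos Q hQsymm hQpos M hMoff
end
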